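/- Let A be a dehyperplane arrangement in an n-simanifold T. Then every element of L_A is an i-simanifold for some i in {0,1,...,n}; that is, L_A ⊆ ⊔_{i=0}^n R_i. -/

import Mathlib

open Set

noncomputable section

/-- The ambient Euclidean space `ℝ^N`. -/
abbrev Euc (N : ℕ) := EuclideanSpace ℝ (Fin N)

/-- An `i`-simanifold: a nonempty (open, i.e. boundaryless) contractible topological
`i`-manifold, realized as a subset of the ambient space. -/
def IsSimanifold {N : ℕ} (i : ℕ) (S : Set (Euc N)) : Prop :=
  S.Nonempty ∧ ContractibleSpace S ∧ Nonempty (ChartedSpace (EuclideanSpace ℝ (Fin i)) S)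

/-- A dehyperplane in an `n`-simanifold `T`: an `(n-1)`-simanifold `P ⊆ T` cutting `T`
into two `n`-simanifolds `plus` and `minus`, with `plus ⊔ P ⊔ minus = T` and
`closure plus ∩ closure minus = P`. -/
structure Dehyperplane (N n : ℕ) (T : Set (Euc N)) where
  P : Set (Euc N)
  plus : Set (Euc N)
  minus : Set (Euc N)
  simP : IsSimanifold (n - 1) P
  simPlus : IsSimanifold n plus
  simMinus : IsSimanifold n minus
  union_eq : plus ∪ P ∪ minus = T
  disj_pP : Disjoint plus P
  disj_pm : Disjoint plus minus
  disj_Pm : Disjoint P minus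
  closure_eq : closure plus ∩ closure minus = P

/-- `L_A`: the set of nonempty intersections of elements of `A` (empty intersection `T`),
the flats of `A`. (Ordered by reverse inclusion: `X ≤ Y ↔ Y ⊆ X`.) -/
def flats {N n : ℕ} {T : Set (Euc N)} (A : Set (Dehyperplane N n T)) : Set (Set (Euc N)) :=
  {X | X.Nonempty ∧ ∃ B ⊆ A, X = T ∩ ⋂ P ∈ B, P.P}

/-- A dehyperplane arrangement (DA) in the `n`-simanifold `T`. -/
def IsDA {N : ℕ} (n : ℕ) (T : Set (Euc N)) (A : Set (Dehyperplane N n T)) : Prop :=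
  A.Finite ∧ ∀ P ∈ A, ∀ X ∈ flats A, (P.P ∩ X).Nonempty →
    X ⊆ P.P ∨ ∃ i, 1 ≤ i ∧ i ≤ n ∧ IsSimanifold (i - 1) (P.P ∩ X) ∧
      IsSimanifold i (P.plus ∩ X) ∧ IsSimanifold i (P.minus ∩ X)

/-- `P^ε` for a sign `ε ∈ {+,0,-}`. -/
def Dehyperplane.part {N n : ℕ} {T : Set (Euc N)} (P : Dehyperplane N n T) :
    SignType → Set (Euc N)
  | .pos => P.plus
  | .zero => P.P
  | .neg => P.minus

/-- A face of `A`: a nonempty set of the form `⋂_{P ∈ A} P^{ε_P}`. -/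
def IsFace {N n : ℕ} {T : Set (Euc N)} (A : Set (Dehyperplane N n T))
    (F : Set (Euc N)) : Prop :=
  F.Nonempty ∧ ∃ ε : Dehyperplane N n T → SignType, F = T ∩ ⋂ P ∈ A, P.part (ε P)

/-- A chamber of `A`: a face with `ε_P ≠ 0` for all `P ∈ A`. -/
def IsChamber {N n : ℕ} {T : Set (Euc N)} (A : Set (Dehyperplane N n T))
    (F : Set (Euc N)) : Prop :=
  F.Nonempty ∧ ∃ ε : Dehyperplane N n T → SignType,
    (∀ P ∈ A, ε P ≠ 0) ∧ F = T ∩ ⋂ P ∈ A, P.part (ε P)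

/-- The restriction `A^X = {P ∩ X | P ∈ A, X ⊄ P, P ∩ X ≠ ∅}`, as dehyperplanes in `X`
(viewed as an `m`-simanifold), with halves `P^± ∩ X`. -/
def restrict {N n : ℕ} {T : Set (Euc N)} (A : Set (Dehyperplane N n T)) (m : ℕ)
    (X : Set (Euc N)) : Set (Dehyperplane N m X) :=
  {Q | ∃ P ∈ A, ¬ X ⊆ P.P ∧ (P.P ∩ X).Nonempty ∧
    Q.P = P.P ∩ X ∧ Q.plus = P.plus ∩ X ∧ Q.minus = P.minus ∩ X}

/-- The dimension of a subset of `ℝ^N`: the largest `i` such that `S` contains an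
`i`-simanifold. -/
def sdim {N : ℕ} (S : Set (Euc N)) : ℕ :=
  sSup {i | ∃ T : Set (Euc N), IsSimanifold i T ∧ T ⊆ S}

/- Adding one dehyperplane `P` to the intersection defining a flat `X` either leaves `X`
unchanged (`X ⊆ P`) or, by the DA condition, replaces it by the `(i-1)`-simanifold `P ∩ X`;
induction on the finitely many dehyperplanes intersected, starting from `T`. -/

theorem IsDA.exists_isSimanifold_inter_biInter {N n : ℕ} {T : Set (Euc N)}
    (hT : IsSimanifold n T) {A : Set (Dehyperplane N n T)} (hA : IsDA n T A)
    {B : Set (Dehyperplane N n T)} (hBA : B ⊆ A) (hne : (T ∩ ⋂ P ∈ B, P.P).Nonempty) :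
    ∃ i ≤ n, IsSimanifold i (T ∩ ⋂ P ∈ B, P.P) := by
  induction B, hA.1.subset hBA using Set.Finite.induction_on with
  | empty => exact ⟨n, le_rfl, by simpa using hT⟩
  | @insert P B _ _ ih =>
    rw [biInter_insert, inter_left_comm] at hne ⊢
    have hB : B ⊆ A := (subset_insert P B).trans hBA
    have hneB : (T ∩ ⋂ Q ∈ B, Q.P).Nonempty := hne.mono inter_subset_right
    rcases hA.2 P (hBA (mem_insert P B)) _ ⟨hneB, B, hB, rfl⟩ hne with hsub | ⟨i, -, hin, hsim, -⟩
    · rw [inter_eq_right.mpr hsub]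
      exact ih hB hneB
    · exact ⟨i - 1, (Nat.sub_le i 1).trans hin, hsim⟩

theorem flats_are_simanifolds_general {N n : ℕ} {T : Set (Euc N)}
    (hT : IsSimanifold n T) (A : Set (Dehyperplane N n T)) (hA : IsDA n T A) :
    ∀ X ∈ flats A, ∃ i ≤ n, IsSimanifold i X := by
  rintro X ⟨hne, B, hBA, rfl⟩
  exact hA.exists_isSimanifold_inter_biInter hT hBA hne

/-- every flat of a DA is an `i`-simanifold for some `i ∈ {0,…,n}`. -/
theorem flats_are_simanifolds {N n : ℕ} (hn : 1 ≤ n) {T : Set (Euc N)}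
    (hT : IsSimanifold n T) (A : Set (Dehyperplane N n T)) (hA : IsDA n T A) :
    ∀ X ∈ flats A, ∃ i ≤ n, IsSimanifold i X :=
  flats_are_simanifolds_general hT A hA
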